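/- arXiv:2602.19748 — 2 statements merged into one kernel-verified Lean document; each statement's English description precedes it below -/
import Mathlib

section
/- Fix Φ ∈ (0, π). For x, y > 0 let l(x, y) = arcosh(cosh x cosh y + sinh x sinh y cos Φ) and let f(x, y) = (cosh l(x,y) · cosh x − cosh y)/(sinh l(x,y) · sinh x). Then for all x, y > 0 the partial derivative of f with respect to y exists and equals −sinh x · sinh y · sin²Φ / sinh³ l(x,y), which is strictly negative. -/
/-- The inverse of `cosh` on `[1, ∞)`. -/
noncomputable def arcosh (x : ℝ) : ℝ := Real.log (x + Real.sqrt (x ^ 2 - 1))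

/-- The hyperbolic edge length of the two-circle configuration with radii `x, y` and
exterior intersection angle `Φ`. -/
noncomputable def hypLen (Φ x y : ℝ) : ℝ :=
  arcosh (Real.cosh x * Real.cosh y + Real.sinh x * Real.sinh y * Real.cos Φ)

/-- The cosine of the hyperbolic inner angle at the vertex of radius `x`, given by the
hyperbolic law of cosines. -/
noncomputable def hypCos (Φ x y : ℝ) : ℝ :=
  (Real.cosh (hypLen Φ x y) * Real.cosh x - Real.cosh y) /
    (Real.sinh (hypLen Φ x y) * Real.sinh x)

/-!
Write `C(y) = cosh x cosh y + sinh x sinh y cos Φ = cosh l`, so that `sinh² l = C² - 1`. The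
chain rule through `arcosh` gives `∂l/∂y = (∂C/∂y) / sinh l`, and after clearing denominators
the numerator of the quotient rule for `f` reduces, by `cosh² - sinh² = 1` and
`sin² + cos² = 1`, to `-sinh² x sinh y sin² Φ`. Since `cos Φ > -1`, `C(y) > cosh (x - y) ≥ 1`,
so `l > 0` and the derivative is negative.
-/

open Real

lemma neg_one_lt_cos_of_mem_Ioo {Φ : ℝ} (hΦ : Φ ∈ Set.Ioo 0 π) : -1 < cos Φ := by
  simpa using cos_lt_cos_of_nonneg_of_le_pi hΦ.1.le le_rfl hΦ.2

lemma one_lt_cosh_mul_cosh_add_sinh_mul_sinh_mul {x y c : ℝ} (hx : 0 < x) (hy : 0 < y)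
    (hc : -1 < c) : 1 < cosh x * cosh y + sinh x * sinh y * c := by
  have h := one_le_cosh (x - y)
  rw [cosh_sub] at h
  have hsinh := mul_pos (sinh_pos_iff.mpr hx) (sinh_pos_iff.mpr hy)
  nlinarith [mul_pos hsinh (neg_lt_iff_pos_add'.mp hc)]

section

variable {Φ x y : ℝ}

lemma cosh_hypLen (h : 1 ≤ cosh x * cosh y + sinh x * sinh y * cos Φ) :
    cosh (hypLen Φ x y) = cosh x * cosh y + sinh x * sinh y * cos Φ :=
  Real.cosh_arcosh h

lemma sinh_hypLen_pos (h : 1 < cosh x * cosh y + sinh x * sinh y * cos Φ) :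
    0 < sinh (hypLen Φ x y) :=
  sinh_pos_iff.mpr (Real.arcosh_pos h)

lemma hasDerivAt_hypLen (h : 1 < cosh x * cosh y + sinh x * sinh y * cos Φ) :
    HasDerivAt (hypLen Φ x)
      ((cosh x * sinh y + sinh x * cosh y * cos Φ) / sinh (hypLen Φ x y)) y := by
  have hC : HasDerivAt (fun s => cosh x * cosh s + sinh x * sinh s * cos Φ)
      (cosh x * sinh y + sinh x * cosh y * cos Φ) y :=
    ((hasDerivAt_cosh y).const_mul _).add (((hasDerivAt_sinh y).const_mul _).mul_const _)
  rw [div_eq_inv_mul, hypLen, _root_.arcosh, ← Real.arcosh, Real.sinh_arcosh h.le]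
  exact (Real.hasDerivAt_arcosh h).comp y hC

lemma hasDerivAt_hypCos (h : 1 < cosh x * cosh y + sinh x * sinh y * cos Φ) (hx : x ≠ 0) :
    HasDerivAt (hypCos Φ x)
      (-(sinh x * sinh y * sin Φ ^ 2) / sinh (hypLen Φ x y) ^ 3) y := by
  set C := cosh x * cosh y + sinh x * sinh y * cos Φ
  set C' := cosh x * sinh y + sinh x * cosh y * cos Φ
  have hL : HasDerivAt (hypLen Φ x) (C' / sinh (hypLen Φ x y)) y := hasDerivAt_hypLen h
  have hS : sinh (hypLen Φ x y) ≠ 0 := (sinh_hypLen_pos h).ne'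
  have hcoshL : cosh (hypLen Φ x y) = C := cosh_hypLen h.le
  have hsinhL : sinh (hypLen Φ x y) ^ 2 = C ^ 2 - 1 := by
    rw [← hcoshL, cosh_sq (hypLen Φ x y)]; ring
  have hnum : HasDerivAt (fun s => cosh (hypLen Φ x s) * cosh x - cosh s)
      (sinh (hypLen Φ x y) * (C' / sinh (hypLen Φ x y)) * cosh x - sinh y) y :=
    (hL.cosh.mul_const _).sub (hasDerivAt_cosh y)
  have hden : HasDerivAt (fun s => sinh (hypLen Φ x s) * sinh x)
      (cosh (hypLen Φ x y) * (C' / sinh (hypLen Φ x y)) * sinh x) y :=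
    hL.sinh.mul_const _
  have hnumerator : (C' * cosh x - sinh y) * (C ^ 2 - 1) - (C * cosh x - cosh y) * C * C' =
      -(sinh x ^ 2 * sinh y * sin Φ ^ 2) := by
    linear_combination (-(sinh y)) * cosh_sq_sub_sinh_sq x +
      (sinh x ^ 2 * sinh y * cos Φ ^ 2 + cosh x * sinh x * cosh y * cos Φ) *
        cosh_sq_sub_sinh_sq y + (sinh x ^ 2 * sinh y) * sin_sq_add_cos_sq Φ
  refine (hnum.div hden (mul_ne_zero hS (sinh_ne_zero.mpr hx))).congr_deriv ?_
  rw [hcoshL]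
  field_simp
  linear_combination hnumerator + (C' * cosh x - sinh y) * hsinhL


end

/-- For a fixed weight `Φ ∈ (0, π)`, the cosine `f(x, y)` of the hyperbolic inner angle has,
for all `x, y > 0`, partial derivative with respect to `y` equal to
`−sinh x · sinh y · sin²Φ / sinh³ l(x,y)`, which is strictly negative. -/
theorem hyperbolic_cos_deriv_snd (Φ : ℝ) (hΦ : Φ ∈ Set.Ioo 0 Real.pi) :
    ∀ x y : ℝ, 0 < x → 0 < y →
      HasDerivAt (fun s : ℝ => hypCos Φ x s)
        (-(Real.sinh x * Real.sinh y * Real.sin Φ ^ 2) / Real.sinh (hypLen Φ x y) ^ 3) y ∧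
      -(Real.sinh x * Real.sinh y * Real.sin Φ ^ 2) / Real.sinh (hypLen Φ x y) ^ 3 < 0 := by
  intro x y hx hy
  have hC := one_lt_cosh_mul_cosh_add_sinh_mul_sinh_mul hx hy (neg_one_lt_cos_of_mem_Ioo hΦ)
  refine ⟨hasDerivAt_hypCos hC hx.ne', div_neg_of_neg_of_pos (neg_neg_of_pos ?_)
    (pow_pos (sinh_hypLen_pos hC) 3)⟩
  have hsinΦ := sin_pos_of_pos_of_lt_pi hΦ.1 hΦ.2
  exact mul_pos (mul_pos (sinh_pos_iff.mpr hx) (sinh_pos_iff.mpr hy)) (pow_pos hsinΦ 2)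
end

section
/- Fix Φ ∈ (0, π) and define g(t) = θ(t, t) for t > 0, where θ(x, y) = arccos((cosh l(x,y) · cosh x − cosh y)/(sinh l(x,y) · sinh x)) and l(x, y) = arcosh(cosh x cosh y + sinh x sinh y cos Φ). Then g is continuously differentiable and strictly decreasing on (0, ∞). -/
/-- The hyperbolic inner angle at the vertex of radius `x` in the two-circle configuration
with radii `x, y` and exterior intersection angle `Φ`. -/
noncomputable def thetaH (Φ x y : ℝ) : ℝ :=
  Real.arccos ((Real.cosh (hypLen Φ x y) * Real.cosh x - Real.cosh y) /
    (Real.sinh (hypLen Φ x y) * Real.sinh x))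

/-! On the diagonal the edge length satisfies `cosh l = 1 + (1 + cos Φ) sinh² t`. With the
half-angle substitution `cos Φ = (1 - T²) / (1 + T²)`, `T = tan (Φ / 2)`, the quantity
`cosh² l - 1` becomes a perfect square times `cosh² t + T²`, and the cosine of the angle collapses
to `cosh t / √(cosh² t + T²)`. Hence `θ(t, t) = arctan (tan (Φ / 2) / cosh t)`, which is smooth
and, as `cosh` increases on `(0, ∞)`, strictly decreasing. -/

open Real Set

lemma arcosh_eq_real_arcosh : _root_.arcosh = Real.arcosh := rfl

lemma hypLen_self (Φ t : ℝ) : hypLen Φ t t = Real.arcosh (1 + (1 + cos Φ) * sinh t ^ 2) := by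
  rw [hypLen, arcosh_eq_real_arcosh]
  congr 1
  linear_combination cosh_sq' t

lemma arccos_div_sqrt_sq_add_sq {a b : ℝ} (ha : 0 < a) (hb : 0 ≤ b) :
    arccos (a / √(a ^ 2 + b ^ 2)) = arctan (b / a) := by
  rw [arctan_eq_arccos (div_nonneg hb ha.le), show 1 + (b / a) ^ 2 = (a ^ 2 + b ^ 2) / a ^ 2 by
    field_simp, sqrt_div' _ (sq_nonneg a), sqrt_sq ha.le, inv_div]

lemma thetaH_self {Φ t : ℝ} (hcos : cos Φ ≠ -1) (ht : 0 < t) :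
    thetaH Φ t t = arccos (cosh t / √(cosh t ^ 2 + tan (Φ / 2) ^ 2)) := by
  have hc := cos_eq_two_mul_tan_half_div_one_sub_tan_half_sq Φ hcos
  set T := tan (Φ / 2)
  have hs : 0 < sinh t := sinh_pos_iff.mpr ht
  have h1c : 1 + cos Φ = 2 / (1 + T ^ 2) := by rw [hc]; field_simp; ring
  set X := 1 + (1 + cos Φ) * sinh t ^ 2 with hXdef
  have hX : 1 ≤ X := le_add_of_nonneg_right (by rw [h1c]; positivity)
  have hX2 : X ^ 2 - 1 = ((1 + cos Φ) * sinh t) ^ 2 * (cosh t ^ 2 + T ^ 2) := by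
    rw [hXdef, cosh_sq', h1c]; field_simp; ring
  rw [thetaH, hypLen_self, cosh_arcosh hX, sinh_arcosh hX, hX2, sqrt_mul (sq_nonneg _),
    sqrt_sq (by rw [h1c]; positivity)]
  congr 1
  rw [hXdef, h1c]
  field_simp
  ring

lemma tan_half_pos {Φ : ℝ} (hΦ : Φ ∈ Ioo 0 π) : 0 < tan (Φ / 2) :=
  tan_pos_of_pos_of_lt_pi_div_two (by linarith [hΦ.1]) (by linarith [hΦ.2])

lemma thetaH_self_eq_arctan {Φ t : ℝ} (hΦ : Φ ∈ Ioo 0 π) (ht : 0 < t) :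
    thetaH Φ t t = arctan (tan (Φ / 2) / cosh t) := by
  have hcos : cos Φ ≠ -1 := by
    have := cos_lt_cos_of_nonneg_of_le_pi hΦ.1.le le_rfl hΦ.2
    rw [cos_pi] at this
    exact this.ne'
  rw [thetaH_self hcos ht, arccos_div_sqrt_sq_add_sq (cosh_pos t) (tan_half_pos hΦ).le]

/-- For a fixed weight `Φ ∈ (0, π)`, the function `t ↦ θ(t, t)` (the hyperbolic inner
angle at equal radii) is continuously differentiable and strictly decreasing on `(0, ∞)`. -/
theorem hyperbolic_angle_diag_C1_strictAnti (Φ : ℝ) (hΦ : Φ ∈ Set.Ioo 0 Real.pi) :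
    ContDiffOn ℝ 1 (fun t => thetaH Φ t t) (Set.Ioi 0) ∧
    StrictAntiOn (fun t => thetaH Φ t t) (Set.Ioi 0) := by
  have hEq : EqOn (fun t => arctan (tan (Φ / 2) / cosh t)) (fun t => thetaH Φ t t) (Ioi 0) :=
    fun t ht => (thetaH_self_eq_arctan hΦ ht).symm
  constructor
  · exact (contDiff_arctan.comp (contDiff_const.div contDiff_cosh
      fun t => (cosh_pos t).ne')).contDiffOn.congr hEq.symm
  · refine (arctan_strictMono.comp_strictAntiOn ?_).congr hEq
    intro a ha b hb hab
    exact div_lt_div_of_pos_left (tan_half_pos hΦ) (cosh_pos a)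
      (cosh_strictMonoOn (Ioi_subset_Ici_self ha) (Ioi_subset_Ici_self hb) hab)
end
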